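/- In Schlumprecht's space, ‖e₁ + e₂ + ⋯ + e_n‖ = n/f(n) for every n ∈ ℕ, where f(n) = log₂(n+1). -/

import Mathlib

open scoped Classical

noncomputable def f (l : ℕ) : ℝ := Real.logb 2 (l + 1)

open Real Set

lemma hasDerivAt_logshift (x : ℝ) (hx : 0 < x + 1) :
    HasDerivAt (fun y : ℝ => Real.log (y + 1)) (x+1)⁻¹ x := by
  have h1 : HasDerivAt (fun y : ℝ => y + 1) 1 x := (hasDerivAt_id x).add_const 1
  have := (Real.hasDerivAt_log hx.ne').comp x h1
  simpa [Function.comp_def] using this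

lemma contOn_logshift {s : Set ℝ} (hs : ∀ x ∈ s, 0 < x + 1) :
    ContinuousOn (fun y : ℝ => Real.log (y + 1)) s := by
  intro x hx
  have h1 : ContinuousAt (fun y : ℝ => y + 1) x := by fun_prop
  exact (h1.log (hs x hx).ne').continuousWithinAt

-- B2 : (x+2) log (x+1) ≥ 2x  for x ≥ 0
lemma auxB2 {x : ℝ} (hx : 0 ≤ x) : 2 * x ≤ (x + 2) * Real.log (x + 1) := by
  have hmono : MonotoneOn (fun x : ℝ => (x + 2) * Real.log (x + 1) - 2 * x) (Ici 0) := by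
    apply monotoneOn_of_deriv_nonneg (convex_Ici 0)
    · apply ContinuousOn.sub
      · exact (continuous_id.add continuous_const).continuousOn.mul
          (contOn_logshift (fun y hy => by simp only [mem_Ici] at hy; linarith))
      · exact (continuous_const.mul continuous_id).continuousOn
    · intro y hy
      rw [interior_Ici] at hy
      have hy1 : (0:ℝ) < y + 1 := by simp at hy; linarith
      exact (((((hasDerivAt_id y).add_const 2).mul (hasDerivAt_logshift y hy1)).sub
        ((hasDerivAt_id y).const_mul 2)).differentiableAt).differentiableWithinAt
    · intro y hy
      rw [interior_Ici] at hy
      simp only [mem_Ioi] at hy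
      have hy1 : (0:ℝ) < y + 1 := by linarith
      have hd : HasDerivAt (fun x : ℝ => (x + 2) * Real.log (x + 1) - 2 * x)
          (1 * Real.log (y+1) + (y+2) * (y+1)⁻¹ - 2 * 1) y :=
        ((((hasDerivAt_id y).add_const 2).mul (hasDerivAt_logshift y hy1)).sub
          ((hasDerivAt_id y).const_mul 2))
      rw [hd.deriv]
      have hlog : y / (y + 1) ≤ Real.log (y + 1) := by
        have := Real.add_one_le_exp (Real.log (y+1))
        have h2 := Real.log_le_sub_one_of_pos (x := (y+1)⁻¹) (by positivity)
        rw [Real.log_inv] at h2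
        have : (y+1)⁻¹ - 1 = -(y / (y+1)) := by field_simp; ring
        linarith [h2, this ▸ h2]
      have h3 : (y+2) * (y+1)⁻¹ = 1 + 1/(y+1) := by field_simp; ring
      have h4 : y / (y+1) = 1 - 1/(y+1) := by field_simp; ring
      nlinarith [hlog, h3, h4]
  have := hmono (self_mem_Ici) (mem_Ici.2 hx) hx
  simp at this
  nlinarith [this]

-- B1 : (y+1) log (y+1) ≥ 2 y log 2  for y ≥ 1
lemma auxB1 {y : ℝ} (hy : 1 ≤ y) : 2 * y * Real.log 2 ≤ (y + 1) * Real.log (y + 1) := by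
  have hmono : MonotoneOn (fun y : ℝ => (y + 1) * Real.log (y + 1) - 2 * y * Real.log 2) (Ici 1) := by
    apply monotoneOn_of_deriv_nonneg (convex_Ici 1)
    · apply ContinuousOn.sub
      · exact (continuous_id.add continuous_const).continuousOn.mul
          (contOn_logshift (fun z hz => by simp only [mem_Ici] at hz; linarith))
      · fun_prop
    · intro z hz
      rw [interior_Ici] at hz
      simp only [mem_Ioi] at hz
      have hz1 : (0:ℝ) < z + 1 := by linarith
      exact ((((hasDerivAt_id z).add_const 1).mul (hasDerivAt_logshift z hz1)).sub
        (((hasDerivAt_id z).const_mul 2).mul_const (Real.log 2))).differentiableAt.differentiableWithinAt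
    · intro z hz
      rw [interior_Ici] at hz
      simp only [mem_Ioi] at hz
      have hz1 : (0:ℝ) < z + 1 := by linarith
      have hd : HasDerivAt (fun y : ℝ => (y + 1) * Real.log (y + 1) - 2 * y * Real.log 2)
          (1 * Real.log (z+1) + (z+1) * (z+1)⁻¹ - 2 * 1 * Real.log 2) z :=
        (((hasDerivAt_id z).add_const 1).mul (hasDerivAt_logshift z hz1)).sub
          (((hasDerivAt_id z).const_mul 2).mul_const (Real.log 2))
      rw [hd.deriv]
      have h1 : (z+1) * (z+1)⁻¹ = 1 := by field_simp
      have h2 : Real.log 2 ≤ Real.log (z+1) := Real.log_le_log (by norm_num) (by linarith)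
      have h3 : Real.log 2 < 1 := by
        have := Real.log_two_lt_d9; linarith
      nlinarith
  have := hmono (self_mem_Ici) (mem_Ici.2 hy) hy
  norm_num at this
  nlinarith [this]

-- B : log(xy+1) * log 2 ≤ log(x+1) * log(y+1)  for x, y ≥ 1
lemma auxB {x y : ℝ} (hx : 1 ≤ x) (hy : 1 ≤ y) :
    Real.log (x * y + 1) * Real.log 2 ≤ Real.log (x + 1) * Real.log (y + 1) := by
  have hC : Real.log 2 ≤ Real.log (y + 1) := Real.log_le_log (by norm_num) (by linarith)
  have hlog2 : (0:ℝ) < Real.log 2 := Real.log_pos (by norm_num)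
  have hmono : MonotoneOn
      (fun x : ℝ => Real.log (x + 1) * Real.log (y + 1) - Real.log (x * y + 1) * Real.log 2)
      (Ici 1) := by
    apply monotoneOn_of_deriv_nonneg (convex_Ici 1)
    · apply ContinuousOn.sub
      · exact (contOn_logshift (fun z hz => by simp only [mem_Ici] at hz; linarith)).mul
          continuousOn_const
      · apply ContinuousOn.mul _ continuousOn_const
        intro z hz
        simp only [mem_Ici] at hz
        have h1 : ContinuousAt (fun z : ℝ => z * y + 1) z := by fun_prop
        exact (h1.log (by nlinarith)).continuousWithinAt
    · intro z hz
      rw [interior_Ici] at hz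
      simp only [mem_Ioi] at hz
      have hz1 : (0:ℝ) < z + 1 := by linarith
      have hzy : (0:ℝ) < z * y + 1 := by nlinarith
      have hinner : HasDerivAt (fun z : ℝ => z * y + 1) y z := by
        simpa using ((hasDerivAt_id z).mul_const y).add_const 1
      have hlzy : HasDerivAt (fun z : ℝ => Real.log (z * y + 1)) ((z*y+1)⁻¹ * y) z := by
        have := (Real.hasDerivAt_log hzy.ne').comp z hinner
        simpa [Function.comp_def] using this
      exact (((hasDerivAt_logshift z hz1).mul_const (Real.log (y+1))).sub
        (hlzy.mul_const (Real.log 2))).differentiableAt.differentiableWithinAt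
    · intro z hz
      rw [interior_Ici] at hz
      simp only [mem_Ioi] at hz
      have hz1 : (0:ℝ) < z + 1 := by linarith
      have hzy : (0:ℝ) < z * y + 1 := by nlinarith
      have hinner : HasDerivAt (fun z : ℝ => z * y + 1) y z := by
        simpa using ((hasDerivAt_id z).mul_const y).add_const 1
      have hlzy : HasDerivAt (fun z : ℝ => Real.log (z * y + 1)) ((z*y+1)⁻¹ * y) z := by
        have := (Real.hasDerivAt_log hzy.ne').comp z hinner
        simpa [Function.comp_def] using this
      have hd : HasDerivAt
          (fun z : ℝ => Real.log (z + 1) * Real.log (y + 1) - Real.log (z * y + 1) * Real.log 2)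
          ((z+1)⁻¹ * Real.log (y+1) - (z*y+1)⁻¹ * y * Real.log 2) z :=
        ((hasDerivAt_logshift z hz1).mul_const (Real.log (y+1))).sub
          (hlzy.mul_const (Real.log 2))
      rw [hd.deriv]
      rw [sub_nonneg]
      rw [show (z*y+1)⁻¹ * y * Real.log 2 = (y * Real.log 2)/(z*y+1) by ring,
        show (z+1)⁻¹ * Real.log (y+1) = Real.log (y+1)/(z+1) by ring,
        div_le_div_iff₀ hzy hz1]
      nlinarith [auxB1 hy, hC, hlog2,
        mul_nonneg (mul_nonneg (by linarith : (0:ℝ) ≤ z - 1) (by linarith : (0:ℝ) ≤ y))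
          (sub_nonneg.2 hC)]
  have h1 := hmono (self_mem_Ici) (mem_Ici.2 hx) hx
  norm_num at h1
  nlinarith [h1]

noncomputable def Gd (x : ℝ) : ℝ :=
  (1 * Real.log (x+1) - x * (x+1)⁻¹) / (Real.log (x+1))^2

noncomputable def Gdd (x : ℝ) : ℝ :=
  ((x * ((x+1)^2)⁻¹) * (Real.log (x+1))^2 -
    (1 * Real.log (x+1) - x * (x+1)⁻¹) * (2 * Real.log (x+1) ^ 1 * (x+1)⁻¹)) /
    ((Real.log (x+1))^2)^2

lemma hasDerivAt_Glog {x : ℝ} (hx : 0 < x) :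
    HasDerivAt (fun y : ℝ => y / Real.log (y+1)) (Gd x) x := by
  have hx1 : (0:ℝ) < x + 1 := by linarith
  have hL : 0 < Real.log (x+1) := Real.log_pos (by linarith)
  have := (hasDerivAt_id x).div (hasDerivAt_logshift x hx1) hL.ne'
  exact this

lemma hasDerivAt_Gd {x : ℝ} (hx : 0 < x) : HasDerivAt Gd (Gdd x) x := by
  have hx1 : (0:ℝ) < x + 1 := by linarith
  have hL : 0 < Real.log (x+1) := Real.log_pos (by linarith)
  have hinv : HasDerivAt (fun y : ℝ => (y+1)⁻¹) (-1 / (x+1)^2) x := by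
    exact (((hasDerivAt_id x).add_const 1).inv hx1.ne')
  have hN : HasDerivAt (fun y : ℝ => 1 * Real.log (y+1) - y * (y+1)⁻¹)
      (x * ((x+1)^2)⁻¹) x := by
    have h2 : HasDerivAt (fun y : ℝ => y * (y+1)⁻¹)
        (1 * (x+1)⁻¹ + x * (-1 / (x+1)^2)) x := (hasDerivAt_id x).mul hinv
    have h3 := ((hasDerivAt_logshift x hx1).const_mul 1).sub h2
    rw [show x * ((x+1)^2)⁻¹ = 1 * (x+1)⁻¹ - (1 * (x+1)⁻¹ + x * (-1 / (x+1)^2)) by ring]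
    exact h3
  have hP : HasDerivAt (fun y : ℝ => (Real.log (y+1))^2)
      (2 * Real.log (x+1) ^ 1 * (x+1)⁻¹) x := by
    exact ((hasDerivAt_logshift x hx1).pow 2).congr_deriv (by norm_num)
  exact hN.div hP (by positivity)

lemma concave_Glog : ConcaveOn ℝ (Set.Ici 1) (fun y : ℝ => y / Real.log (y+1)) := by
  apply concaveOn_of_hasDerivWithinAt2_nonpos (f' := Gd) (f'' := Gdd) (convex_Ici 1)
  · apply ContinuousOn.div continuousOn_id
      (contOn_logshift (fun z hz => by simp only [mem_Ici] at hz; linarith))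
    intro z hz
    simp only [mem_Ici] at hz
    exact (Real.log_pos (by linarith)).ne'
  · intro z hz
    rw [interior_Ici] at hz
    exact (hasDerivAt_Glog (by simp only [mem_Ioi] at hz; linarith)).hasDerivWithinAt
  · intro z hz
    rw [interior_Ici] at hz
    exact (hasDerivAt_Gd (by simp only [mem_Ioi] at hz; linarith)).hasDerivWithinAt
  · intro z hz
    rw [interior_Ici] at hz
    simp only [mem_Ioi] at hz
    have hz1 : (0:ℝ) < z + 1 := by linarith
    have hL : 0 < Real.log (z+1) := Real.log_pos (by linarith)
    have hB2 := auxB2 (by linarith : (0:ℝ) ≤ z)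
    apply div_nonpos_of_nonpos_of_nonneg _ (by positivity)
    rw [sub_nonpos]
    have hB2' : (0:ℝ) ≤ (z+2) * Real.log (z+1) - 2*z := by linarith
    have hkey := mul_nonneg hL.le hB2'
    rw [show z * ((z+1)^2)⁻¹ * (Real.log (z+1))^2
          = (z * (Real.log (z+1))^2) / ((z+1)^2) by ring,
      show (1 * Real.log (z+1) - z * (z+1)⁻¹) * (2 * Real.log (z+1) ^ 1 * (z+1)⁻¹)
          = ((Real.log (z+1) * (z+1) - z) * (2 * Real.log (z+1))) / ((z+1)^2) by
        rw [pow_one, eq_div_iff (pow_ne_zero 2 hz1.ne')]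
        have hu : (z+1)⁻¹ * (z+1) = 1 := inv_mul_cancel₀ hz1.ne'
        linear_combination (2*Real.log (z+1)*(Real.log (z+1)*(z+1)
          - z*((z+1)⁻¹*(z+1)+1))) * hu]
    apply div_le_div_of_nonneg_right ?_ (by positivity)
    nlinarith [hkey]

lemma logb2_pos {x : ℝ} (hx : 0 < x) : 0 < Real.logb 2 (x+1) :=
  Real.logb_pos (by norm_num) (by linarith)

lemma concave_G : ConcaveOn ℝ (Set.Ici 1) (fun x : ℝ => x / Real.logb 2 (x+1)) := by
  have hlog2 : (0:ℝ) < Real.log 2 := Real.log_pos (by norm_num)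
  have h := concave_Glog.smul hlog2.le
  refine h.congr ?_
  intro x _
  simp only [Pi.smul_apply, smul_eq_mul, Real.logb]
  rw [div_div_eq_mul_div]
  ring

lemma Gmono {x y : ℝ} (hx : 0 < x) (hxy : x ≤ y) :
    x / Real.logb 2 (x+1) ≤ y / Real.logb 2 (y+1) := by
  have hy : 0 < y := lt_of_lt_of_le hx hxy
  have hLx := logb2_pos hx
  have hLy := logb2_pos hy
  have hlog2 : (0:ℝ) < Real.log 2 := Real.log_pos (by norm_num)
  rw [div_le_div_iff₀ hLx hLy]
  have key : x * Real.log (y+1) ≤ y * Real.log (x+1) := by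
    have hcon := strictConcaveOn_log_Ioi.concaveOn
    have h1 : (1:ℝ) ∈ Set.Ioi (0:ℝ) := by norm_num
    have h2 : y + 1 ∈ Set.Ioi (0:ℝ) := by simp; linarith
    have ha : 0 ≤ 1 - x/y := by
      rw [sub_nonneg]
      exact (div_le_one hy).2 hxy
    have hb : 0 ≤ x/y := by positivity
    have hs := hcon.2 h1 h2 ha hb (by ring)
    rw [smul_eq_mul, smul_eq_mul, smul_eq_mul, smul_eq_mul, Real.log_one, mul_zero,
      zero_add] at hs
    have harg : (1 - x/y) * 1 + x/y * (y+1) = x + 1 := by field_simp; ring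
    rw [harg] at hs
    have := mul_le_mul_of_nonneg_left hs hy.le
    calc x * Real.log (y+1) = y * (x/y * Real.log (y+1)) := by field_simp
      _ ≤ y * Real.log (x+1) := this
  calc x * Real.logb 2 (y+1) = (x * Real.log (y+1)) / Real.log 2 := by
        rw [Real.logb]; ring
    _ ≤ (y * Real.log (x+1)) / Real.log 2 := by gcongr
    _ = y * Real.logb 2 (x+1) := by rw [Real.logb]; ring

noncomputable def g (m : ℕ) : ℝ := m / f m

lemma f_nonneg (l : ℕ) : 0 ≤ f l :=
  Real.logb_nonneg (by norm_num) (by push_cast; linarith [Nat.cast_nonneg (α := ℝ) l])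

lemma f_pos {l : ℕ} (hl : 1 ≤ l) : 0 < f l :=
  Real.logb_pos (by norm_num) (by
    have : (1:ℝ) ≤ (l:ℝ) := by exact_mod_cast hl
    linarith)

lemma f_mono {m n : ℕ} (h : m ≤ n) : f m ≤ f n :=
  Real.logb_le_logb_of_le (by norm_num) (by positivity) (by
    have : (m:ℝ) ≤ (n:ℝ) := by exact_mod_cast h
    linarith)

lemma f_le_self (m : ℕ) : f m ≤ m := by
  rw [f, Real.logb_le_iff_le_rpow (by norm_num) (by positivity)]
  rw [Real.rpow_natCast]
  have h := Nat.lt_two_pow_self (n := m)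
  have : (m:ℝ) + 1 ≤ ((2^m : ℕ) : ℝ) := by exact_mod_cast h
  push_cast at this ⊢
  linarith

lemma g_nonneg (m : ℕ) : 0 ≤ g m := div_nonneg (Nat.cast_nonneg m) (f_nonneg m)

lemma f_one : f 1 = 1 := by
  rw [f, show ((1:ℕ):ℝ) + 1 = 2 by norm_num]
  exact Real.logb_self_eq_one (by norm_num)

lemma one_le_f {m : ℕ} (hm : 1 ≤ m) : 1 ≤ f m := by
  have h2 : f 1 ≤ f m := f_mono hm
  rw [f_one] at h2
  exact h2

lemma g_le_self (m : ℕ) : g m ≤ m := by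
  rcases Nat.eq_zero_or_pos m with rfl | hm
  · simp [g]
  · exact div_le_self (Nat.cast_nonneg m) (one_le_f hm)

lemma one_le_g {m : ℕ} (hm : 1 ≤ m) : 1 ≤ g m := by
  rw [g, le_div_iff₀ (f_pos hm), one_mul]
  have := f_le_self m
  linarith

lemma g_eq (k : ℕ) : g k = (k:ℝ) / Real.logb 2 ((k:ℝ)+1) := rfl

set_option maxHeartbeats 1000000 in
lemma key (l : ℕ) (m : Fin (l+1) → ℕ) (n : ℕ) (hmn : ∑ i, m i ≤ n) :
    ∑ i, g (m i) ≤ f (l+1) * g n := by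
  classical
  have hzero : ∀ (hz : ∀ i, m i = 0), ∑ i, g (m i) ≤ f (l+1) * g n := by
    intro hz
    have h1 : ∑ i, g (m i) = 0 := by
      apply Finset.sum_eq_zero; intro i _; rw [hz i]; simp [g]
    rw [h1]
    exact mul_nonneg (f_nonneg _) (g_nonneg _)
  rcases Nat.eq_zero_or_pos n with rfl | hn
  · apply hzero
    have h0 := Nat.le_zero.mp hmn
    rw [Finset.sum_eq_zero_iff] at h0
    exact fun i => h0 i (Finset.mem_univ i)
  rcases le_or_gt n (l+1) with hcase | hcase
  · calc ∑ i, g (m i) ≤ ∑ i, (m i : ℝ) := Finset.sum_le_sum (fun i _ => g_le_self _)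
      _ = ((∑ i, m i : ℕ) : ℝ) := by push_cast; rfl
      _ ≤ (n : ℝ) := by exact_mod_cast hmn
      _ = f n * g n := by
          rw [g, mul_div_cancel₀ _ (f_pos hn).ne']
      _ ≤ f (l+1) * g n := mul_le_mul_of_nonneg_right (f_mono hcase) (g_nonneg n)
  · set s : Finset (Fin (l+1)) := Finset.univ.filter (fun i => m i ≠ 0) with hsdef
    by_cases hM0 : s = ∅
    · apply hzero
      intro i
      by_contra h
      have : i ∈ s := by simp [hsdef, h]
      rw [hM0] at this
      simp at this
    have hsne : s.Nonempty := Finset.nonempty_iff_ne_empty.2 hM0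
    obtain ⟨c, hcdef⟩ : ∃ c : ℕ, c = s.card := ⟨_, rfl⟩
    have hc1 : 1 ≤ c := hcdef ▸ Finset.card_pos.2 hsne
    have hcl : c ≤ l + 1 := hcdef ▸ le_trans (Finset.card_filter_le _ _) (by simp)
    obtain ⟨M, hMdef⟩ : ∃ M : ℕ, M = ∑ i, m i := ⟨_, rfl⟩
    have hMn : M ≤ n := hMdef ▸ hmn
    have hcM : c ≤ M := by
      rw [hcdef, hMdef]
      calc s.card = ∑ _i ∈ s, 1 := by simp
        _ ≤ ∑ i ∈ s, m i := Finset.sum_le_sum (fun i hi => by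
            simp only [hsdef, Finset.mem_filter] at hi; omega)
        _ ≤ ∑ i, m i := Finset.sum_le_sum_of_subset (Finset.filter_subset _ _)
    have hM1 : 1 ≤ M := le_trans hc1 hcM
    have hsum : ∑ i, g (m i) = ∑ i ∈ s, g (m i) := by
      symm
      apply Finset.sum_subset (Finset.filter_subset _ _)
      intro i _ hi
      simp only [hsdef, Finset.mem_filter, Finset.mem_univ, true_and, not_not] at hi
      rw [hi]; simp [g]
    have hMs : ∑ i ∈ s, (m i : ℝ) = (M : ℝ) := by
      rw [hMdef]
      push_cast
      apply Finset.sum_subset (Finset.filter_subset _ _)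
      intro i _ hi
      simp only [hsdef, Finset.mem_filter, Finset.mem_univ, true_and, not_not] at hi
      rw [hi]; simp
    have hcR : (0:ℝ) < c := by exact_mod_cast hc1
    have hdR : (0:ℝ) < ((l:ℝ) + 1) := by positivity
    have hcd : (c:ℝ) ≤ (l:ℝ) + 1 := by exact_mod_cast hcl
    have hMR : (1:ℝ) ≤ (M:ℝ) := by exact_mod_cast hM1
    have hMnR : (M:ℝ) ≤ (n:ℝ) := by exact_mod_cast hMn
    have hdn : (l:ℝ) + 1 ≤ (n:ℝ) := by
      have : ((l+1 : ℕ):ℝ) ≤ (n:ℝ) := by exact_mod_cast hcase.le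
      push_cast at this; linarith
    -- Jensen
    have hjen := concave_G.le_map_sum (t := s) (w := fun _ => (c:ℝ)⁻¹)
      (p := fun i => (m i : ℝ))
      (fun i _ => by positivity)
      (by
        rw [Finset.sum_const, nsmul_eq_mul, ← hcdef]
        field_simp)
      (fun i hi => by
        simp only [hsdef, Finset.mem_filter, Finset.mem_univ, true_and] at hi
        simp only [Set.mem_Ici]
        exact_mod_cast Nat.one_le_iff_ne_zero.2 hi)
    simp only [smul_eq_mul] at hjen
    have harg : ∑ i ∈ s, (c:ℝ)⁻¹ * (m i:ℝ) = (M:ℝ)/(c:ℝ) := by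
      rw [← Finset.mul_sum, hMs]
      ring
    rw [harg] at hjen
    have hstep1 : ∑ i ∈ s, g (m i) ≤ (c:ℝ) * (((M:ℝ)/(c:ℝ)) / Real.logb 2 ((M:ℝ)/(c:ℝ)+1)) := by
      have h2 : ∑ i ∈ s, g (m i) = (c:ℝ) * ∑ i ∈ s, (c:ℝ)⁻¹ * ((m i:ℝ) / Real.logb 2 ((m i:ℝ)+1)) := by
        rw [Finset.mul_sum]
        apply Finset.sum_congr rfl
        intro i _
        rw [g_eq, ← mul_assoc, mul_inv_cancel₀ hcR.ne', one_mul]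
      rw [h2]
      exact mul_le_mul_of_nonneg_left hjen hcR.le
    have hLMc : 0 < Real.logb 2 ((M:ℝ)/(c:ℝ)+1) := logb2_pos (by positivity)
    have hLMd : 0 < Real.logb 2 ((M:ℝ)/((l:ℝ)+1)+1) := logb2_pos (by positivity)
    have hLnd : 0 < Real.logb 2 ((n:ℝ)/((l:ℝ)+1)+1) := logb2_pos (by positivity)
    have hstep2 : (c:ℝ) * (((M:ℝ)/(c:ℝ)) / Real.logb 2 ((M:ℝ)/(c:ℝ)+1))
        = (M:ℝ) / Real.logb 2 ((M:ℝ)/(c:ℝ)+1) := by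
      rw [← mul_div_assoc, ← mul_div_assoc, mul_div_cancel_left₀ _ hcR.ne']
    have hstep3 : (M:ℝ) / Real.logb 2 ((M:ℝ)/(c:ℝ)+1)
        ≤ (M:ℝ) / Real.logb 2 ((M:ℝ)/((l:ℝ)+1)+1) := by
      apply div_le_div_of_nonneg_left (by positivity) hLMd
      apply Real.logb_le_logb_of_le (by norm_num) (by positivity)
      have : (M:ℝ)/((l:ℝ)+1) ≤ (M:ℝ)/(c:ℝ) := div_le_div_of_nonneg_left (by positivity) hcR hcd
      linarith
    have hstep4 : (M:ℝ) / Real.logb 2 ((M:ℝ)/((l:ℝ)+1)+1)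
        ≤ (n:ℝ) / Real.logb 2 ((n:ℝ)/((l:ℝ)+1)+1) := by
      have h5 : (M:ℝ)/((l:ℝ)+1) / Real.logb 2 ((M:ℝ)/((l:ℝ)+1)+1)
          ≤ (n:ℝ)/((l:ℝ)+1) / Real.logb 2 ((n:ℝ)/((l:ℝ)+1)+1) :=
        Gmono (by positivity) ((div_le_div_iff_of_pos_right hdR).mpr hMnR)
      have h6 := mul_le_mul_of_nonneg_left h5 hdR.le
      calc (M:ℝ) / Real.logb 2 ((M:ℝ)/((l:ℝ)+1)+1)
          = ((l:ℝ)+1) * ((M:ℝ)/((l:ℝ)+1) / Real.logb 2 ((M:ℝ)/((l:ℝ)+1)+1)) := by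
            rw [eq_comm, ← mul_div_assoc, ← mul_div_assoc, mul_div_cancel_left₀ _ hdR.ne']
        _ ≤ ((l:ℝ)+1) * ((n:ℝ)/((l:ℝ)+1) / Real.logb 2 ((n:ℝ)/((l:ℝ)+1)+1)) := h6
        _ = (n:ℝ) / Real.logb 2 ((n:ℝ)/((l:ℝ)+1)+1) := by
            rw [← mul_div_assoc, ← mul_div_assoc, mul_div_cancel_left₀ _ hdR.ne']
    have hstep5 : (n:ℝ) / Real.logb 2 ((n:ℝ)/((l:ℝ)+1)+1) ≤ f (l+1) * g n := by
      have hnR : (0:ℝ) < (n:ℝ) := by exact_mod_cast hn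
      have hLn : 0 < Real.logb 2 ((n:ℝ)+1) := logb2_pos hnR
      have hlog2 : (0:ℝ) < Real.log 2 := Real.log_pos (by norm_num)
      have hy1 : (1:ℝ) ≤ (n:ℝ)/((l:ℝ)+1) := (one_le_div hdR).2 hdn
      have hxy : ((l:ℝ)+1) * ((n:ℝ)/((l:ℝ)+1)) = (n:ℝ) := by field_simp
      have hB := auxB (x := (l:ℝ)+1) (y := (n:ℝ)/((l:ℝ)+1))
        (by linarith [Nat.cast_nonneg (α := ℝ) l]) hy1
      rw [hxy] at hB
      have hkey2 : Real.logb 2 ((n:ℝ)+1)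
          ≤ Real.logb 2 ((l:ℝ)+1+1) * Real.logb 2 ((n:ℝ)/((l:ℝ)+1)+1) := by
        rw [Real.logb, Real.logb, Real.logb, div_mul_div_comm,
          div_le_div_iff₀ hlog2 (by positivity)]
        nlinarith [hB, hlog2]
      have hfg : f (l+1) * g n = (Real.logb 2 ((l:ℝ)+1+1) * (n:ℝ)) / Real.logb 2 ((n:ℝ)+1) := by
        simp only [f, g]
        push_cast
        ring
      rw [hfg, div_le_div_iff₀ hLnd hLn]
      nlinarith [hkey2, hnR, hLnd]
    linarith [hsum, hstep1, hstep2, hstep3, hstep4, hstep5]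

open scoped Classical

/-- `E₁ < E₂ < ⋯` : the finite sets are successive. -/
def Succ {l : ℕ} (E : Fin l → Finset ℕ) : Prop :=
  ∀ i j : Fin l, i < j → ∀ a ∈ E i, ∀ b ∈ E j, a < b

/-- Restriction `E(x)` of `x` to the finite set `E`. -/
noncomputable def restr (x : ℕ →₀ ℝ) (E : Finset ℕ) : ℕ →₀ ℝ :=
  x.filter (· ∈ E)

/-- The inductively defined norms `|·|_k`. -/
noncomputable def normK : ℕ → (ℕ →₀ ℝ) → ℝ
  | 0, x => ⨆ n, |x n|
  | k + 1, x => ⨆ l : ℕ, ⨆ E : Fin (l + 1) → Finset ℕ,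
      if Succ E then (1 / f (l + 1)) * ∑ i, normK k (restr x (E i)) else 0

/-- The Schlumprecht norm `‖x‖ = sup_k |x|_k`. -/
noncomputable def S (x : ℕ →₀ ℝ) : ℝ := ⨆ k, normK k x

noncomputable def yA (A : Finset ℕ) : ℕ →₀ ℝ := ∑ i ∈ A, Finsupp.single i (1:ℝ)

lemma yA_apply (A : Finset ℕ) (j : ℕ) : yA A j = if j ∈ A then 1 else 0 := by
  classical
  rw [yA, Finsupp.finset_sum_apply]
  simp [Finsupp.single_apply]

lemma restr_yA (A E : Finset ℕ) : restr (yA A) E = yA (A ∩ E) := by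
  classical
  ext j
  rw [restr, Finsupp.filter_apply]
  simp only [yA_apply, Finset.mem_inter]
  by_cases h1 : j ∈ A <;> by_cases h2 : j ∈ E <;> simp [h1, h2]

lemma normK_nonneg : ∀ (k : ℕ) (x : ℕ →₀ ℝ), 0 ≤ normK k x := by
  intro k
  induction k with
  | zero => intro x; exact Real.iSup_nonneg fun i => abs_nonneg _
  | succ k ih =>
    intro x
    apply Real.iSup_nonneg; intro l
    apply Real.iSup_nonneg; intro E
    split
    · exact mul_nonneg (div_nonneg one_pos.le (f_nonneg _)) (Finset.sum_nonneg fun i _ => ih _)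
    · exact le_rfl

lemma succ_card_sum {l : ℕ} {E : Fin (l+1) → Finset ℕ} (hE : Succ E) (A : Finset ℕ) :
    ∑ i, (A ∩ E i).card ≤ A.card := by
  classical
  have hEd : ∀ i j : Fin (l+1), i < j → Disjoint (E i) (E j) := by
    intro i j h
    rw [Finset.disjoint_left]
    intro a ha ha'
    exact lt_irrefl a (hE i j h a ha a ha')
  have hdisj : ∀ i j : Fin (l+1), i ≠ j → Disjoint (A ∩ E i) (A ∩ E j) := by
    intro i j hij
    rcases lt_or_gt_of_ne hij with h | h
    · exact (hEd i j h).mono Finset.inter_subset_right Finset.inter_subset_right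
    · exact ((hEd j i h).mono Finset.inter_subset_right Finset.inter_subset_right).symm
  calc ∑ i, (A ∩ E i).card = (Finset.univ.biUnion (fun i => A ∩ E i)).card :=
      (Finset.card_biUnion (fun i _ j _ hij => hdisj i j hij)).symm
    _ ≤ A.card := Finset.card_le_card (by
        intro a ha
        rw [Finset.mem_biUnion] at ha
        obtain ⟨i, _, hi⟩ := ha
        exact (Finset.mem_inter.1 hi).1)

lemma term_le {k : ℕ} (ih : ∀ A : Finset ℕ, normK k (yA A) ≤ g A.card)
    (A : Finset ℕ) (l : ℕ) (E : Fin (l+1) → Finset ℕ) :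
    (if Succ E then (1 / f (l + 1)) * ∑ i, normK k (restr (yA A) (E i)) else 0)
      ≤ g A.card := by
  split
  case isTrue hE =>
    have hfl : 0 < f (l+1) := f_pos (Nat.succ_le_succ (Nat.zero_le l))
    have h1 : ∑ i, normK k (restr (yA A) (E i)) ≤ f (l+1) * g A.card := by
      calc ∑ i, normK k (restr (yA A) (E i)) = ∑ i, normK k (yA (A ∩ E i)) := by
            simp_rw [restr_yA]
        _ ≤ ∑ i, g ((A ∩ E i).card) := Finset.sum_le_sum fun i _ => ih _
        _ ≤ f (l+1) * g A.card :=
            key l (fun i => (A ∩ E i).card) A.card (succ_card_sum hE A)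
    calc (1 / f (l+1)) * ∑ i, normK k (restr (yA A) (E i))
        ≤ (1 / f (l+1)) * (f (l+1) * g A.card) :=
          mul_le_mul_of_nonneg_left h1 (by positivity)
      _ = g A.card := by field_simp
  case isFalse _ => exact g_nonneg _

lemma normK_le (k : ℕ) : ∀ A : Finset ℕ, normK k (yA A) ≤ g A.card := by
  induction k with
  | zero =>
    intro A
    show (⨆ j, |yA A j|) ≤ g A.card
    apply Real.iSup_le _ (g_nonneg _)
    intro j
    rw [yA_apply]
    by_cases hj : j ∈ A
    · simp only [hj, if_true, abs_one]
      exact one_le_g (Finset.card_pos.2 ⟨j, hj⟩)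
    · simpa [hj] using g_nonneg A.card
  | succ k ih =>
    intro A
    show (⨆ l : ℕ, ⨆ E : Fin (l + 1) → Finset ℕ,
      if Succ E then (1 / f (l + 1)) * ∑ i, normK k (restr (yA A) (E i)) else 0) ≤ g A.card
    apply Real.iSup_le _ (g_nonneg _)
    intro l
    exact Real.iSup_le (fun E => term_le ih A l E) (g_nonneg _)

theorem stmt13 (n : ℕ) :
    S (∑ i ∈ Finset.range n, Finsupp.single i (1 : ℝ)) = n / f n := by
  classical
  have hx : (∑ i ∈ Finset.range n, Finsupp.single i (1:ℝ)) = yA (Finset.range n) := rfl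
  rw [hx]
  have hup : ∀ k, normK k (yA (Finset.range n)) ≤ g n := by
    intro k
    simpa [Finset.card_range] using normK_le k (Finset.range n)
  have hbddS : BddAbove (Set.range fun k => normK k (yA (Finset.range n))) := by
    refine ⟨g n, ?_⟩
    rintro v ⟨k, rfl⟩
    exact hup k
  rcases Nat.eq_zero_or_pos n with rfl | hn
  · have h1 : S (yA (Finset.range 0)) ≤ 0 := by
      apply Real.iSup_le _ le_rfl
      intro k
      have := hup k
      simpa [g, f] using this
    have h2 : 0 ≤ S (yA (Finset.range 0)) := Real.iSup_nonneg fun k => normK_nonneg k _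
    rw [le_antisymm h1 h2]
    simp [f]
  · obtain ⟨p, rfl⟩ := Nat.exists_eq_succ_of_ne_zero hn.ne'
    apply le_antisymm
    · exact Real.iSup_le hup (g_nonneg _)
    · -- lower bound
      set E₀ : Fin (p+1) → Finset ℕ := fun i => {(i:ℕ)} with hE₀
      have hSucc : Succ E₀ := by
        intro i j hij a ha b hb
        simp only [hE₀, Finset.mem_singleton] at ha hb
        subst ha; subst hb
        exact hij
      have hone : ∀ i : Fin (p+1), normK 0 (restr (yA (Finset.range (p+1))) (E₀ i)) = 1 := by
        intro i
        rw [restr_yA]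
        have hinter : Finset.range (p+1) ∩ {(i:ℕ)} = {(i:ℕ)} := by
          rw [Finset.inter_eq_right, Finset.singleton_subset_iff, Finset.mem_range]
          exact i.isLt
        rw [hinter]
        show (⨆ j, |yA {(i:ℕ)} j|) = 1
        apply le_antisymm
        · apply Real.iSup_le _ zero_le_one
          intro j
          show |yA {(i:ℕ)} j| ≤ 1
          rw [yA_apply]; split <;> simp
        · have hb : BddAbove (Set.range fun j => |yA {(i:ℕ)} j|) := by
            refine ⟨1, ?_⟩
            rintro v ⟨j, rfl⟩
            show |yA {(i:ℕ)} j| ≤ 1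
            rw [yA_apply]; split <;> simp
          calc (1:ℝ) = |yA {(i:ℕ)} (i:ℕ)| := by rw [yA_apply]; simp
            _ ≤ ⨆ j, |yA {(i:ℕ)} j| := le_ciSup hb _
      have hvalue : (if Succ E₀ then
          (1 / f (p + 1)) * ∑ i, normK 0 (restr (yA (Finset.range (p+1))) (E₀ i)) else 0)
          = ((p+1 : ℕ) : ℝ) / f (p+1) := by
        rw [if_pos hSucc]
        rw [Finset.sum_congr rfl (fun i _ => hone i)]
        rw [Finset.sum_const, Finset.card_univ, Fintype.card_fin, nsmul_eq_mul, mul_one]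
        rw [one_div, inv_mul_eq_div]
      have hA : ∀ (lv : ℕ) (E : Fin (lv+1) → Finset ℕ),
          (if Succ E then (1 / f (lv + 1)) *
            ∑ i, normK 0 (restr (yA (Finset.range (p+1))) (E i)) else 0) ≤ g (p+1) := by
        intro lv E
        simpa [Finset.card_range] using term_le (normK_le 0) (Finset.range (p+1)) lv E
      have hbdd1 : BddAbove (Set.range fun E : Fin (p+1) → Finset ℕ =>
          (if Succ E then (1 / f (p + 1)) *
            ∑ i, normK 0 (restr (yA (Finset.range (p+1))) (E i)) else 0)) := by
        refine ⟨g (p+1), ?_⟩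
        rintro v ⟨E, rfl⟩
        exact hA p E
      have hbdd2 : BddAbove (Set.range fun lv : ℕ =>
          ⨆ E : Fin (lv+1) → Finset ℕ, (if Succ E then (1 / f (lv + 1)) *
            ∑ i, normK 0 (restr (yA (Finset.range (p+1))) (E i)) else 0)) := by
        refine ⟨g (p+1), ?_⟩
        rintro v ⟨lv, rfl⟩
        exact Real.iSup_le (hA lv) (g_nonneg _)
      have hlow : ((p+1 : ℕ) : ℝ) / f (p+1) ≤ normK 1 (yA (Finset.range (p+1))) := by
        show _ ≤ (⨆ l : ℕ, ⨆ E : Fin (l + 1) → Finset ℕ,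
          if Succ E then (1 / f (l + 1)) *
            ∑ i, normK 0 (restr (yA (Finset.range (p+1))) (E i)) else 0)
        calc ((p+1 : ℕ) : ℝ) / f (p+1)
            = (if Succ E₀ then (1 / f (p + 1)) *
                ∑ i, normK 0 (restr (yA (Finset.range (p+1))) (E₀ i)) else 0) := hvalue.symm
          _ ≤ ⨆ E : Fin (p+1) → Finset ℕ, (if Succ E then (1 / f (p + 1)) *
                ∑ i, normK 0 (restr (yA (Finset.range (p+1))) (E i)) else 0) :=
              le_ciSup hbdd1 E₀
          _ ≤ _ := le_ciSup hbdd2 p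
      calc ((p+1 : ℕ) : ℝ) / f (p+1) ≤ normK 1 (yA (Finset.range (p+1))) := hlow
        _ ≤ S (yA (Finset.range (p+1))) := le_ciSup hbddS 1
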